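/- arXiv:2102.03013 — 2 statements merged into one kernel-verified Lean document; each statement's English description precedes it below -/
import Mathlib

section
/- (Subsampling/mixture) Let P and Q be probability measures on a measurable space Ω, let p ∈ (0,1), and let f = T(P‖Q). Then for every α ∈ [0,1], T(P ‖ (1−p)·P + p·Q)(α) = p·f(α) + (1−p)·(1−α). -/
/-!
Let `M = (1 − p)P + pQ`. Every test `φ` satisfies
`1 − ∫ φ dM = (1 − p)(1 − ∫ φ dP) + p(1 − ∫ φ dQ)`, and `∫ φ dP ≤ α` bounds the first term
below by `(1 − p)(1 − α)`; this gives `≥`. For `≤`, raise an admissible test to `φ + t(1 − φ)`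
with `∫ · dP = α` exactly: this only decreases `1 − ∫ · dQ` and makes the first term equal to
`(1 − p)(1 − α)`.
-/

open MeasureTheory ProbabilityTheory

/-- The tradeoff function `T(P‖Q)(α) = inf {1 − ∫ φ dQ : φ measurable, 0 ≤ φ ≤ 1, ∫ φ dP ≤ α}`. -/
noncomputable def tradeoff {Ω : Type*} [MeasurableSpace Ω] (P Q : Measure Ω) (α : ℝ) : ℝ :=
  sInf { b : ℝ | ∃ φ : Ω → ℝ, Measurable φ ∧ (∀ x, φ x ∈ Set.Icc (0 : ℝ) 1) ∧
    (∫ x, φ x ∂P) ≤ α ∧ b = 1 - ∫ x, φ x ∂Q }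

theorem Real.norm_le_one_of_mem_Icc {x : ℝ} (hx : x ∈ Set.Icc (0 : ℝ) 1) : ‖x‖ ≤ 1 := by
  rw [Real.norm_of_nonneg hx.1]
  exact hx.2

namespace MeasureTheory

variable {Ω : Type*} [MeasurableSpace Ω]

instance isFiniteMeasure_ofReal_smul (μ : Measure Ω) [IsFiniteMeasure μ] (a : ℝ) :
    IsFiniteMeasure (ENNReal.ofReal a • μ) :=
  μ.smul_finite ENNReal.ofReal_ne_top

theorem integral_ofReal_smul_add_ofReal_smul {μ ν : Measure Ω} {f : Ω → ℝ} {a b : ℝ}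
    (ha : 0 ≤ a) (hb : 0 ≤ b) (hμ : Integrable f μ) (hν : Integrable f ν) :
    ∫ x, f x ∂(ENNReal.ofReal a • μ + ENNReal.ofReal b • ν) =
      a * ∫ x, f x ∂μ + b * ∫ x, f x ∂ν := by
  rw [integral_add_measure (hμ.smul_measure ENNReal.ofReal_ne_top)
      (hν.smul_measure ENNReal.ofReal_ne_top), integral_smul_measure, integral_smul_measure,
    ENNReal.toReal_ofReal ha, ENNReal.toReal_ofReal hb, smul_eq_mul, smul_eq_mul]

variable {φ : Ω → ℝ}

theorem integrable_of_mem_Icc (μ : Measure Ω) [IsFiniteMeasure μ] (hφ : Measurable φ)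
    (h01 : ∀ x, φ x ∈ Set.Icc (0 : ℝ) 1) : Integrable φ μ :=
  .of_bound hφ.aestronglyMeasurable 1 <| .of_forall fun x ↦ Real.norm_le_one_of_mem_Icc (h01 x)

theorem integral_le_measureReal_univ_of_mem_Icc (μ : Measure Ω) [IsFiniteMeasure μ]
    (h01 : ∀ x, φ x ∈ Set.Icc (0 : ℝ) 1) : ∫ x, φ x ∂μ ≤ μ.real Set.univ := by
  have hbound : ∀ᵐ x ∂μ, ‖φ x‖ ≤ 1 := .of_forall fun x ↦ Real.norm_le_one_of_mem_Icc (h01 x)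
  simpa using (le_abs_self _).trans (norm_integral_le_of_norm_le_const hbound)

theorem exists_le_integral_eq (P : Measure Ω) [IsProbabilityMeasure P] (hφ : Measurable φ)
    (h01 : ∀ x, φ x ∈ Set.Icc (0 : ℝ) 1) {α : ℝ} (hφα : ∫ x, φ x ∂P ≤ α) (hα : α ≤ 1) :
    ∃ ψ : Ω → ℝ, Measurable ψ ∧ (∀ x, ψ x ∈ Set.Icc (0 : ℝ) 1) ∧ φ ≤ ψ ∧
      ∫ x, ψ x ∂P = α := by
  set a := ∫ x, φ x ∂P
  set t := (α - a) / (1 - a)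
  have ha1 : a ≤ 1 := by simpa using integral_le_measureReal_univ_of_mem_Icc P h01
  have ht0 : 0 ≤ t := div_nonneg (by linarith) (by linarith)
  have ht1 : t ≤ 1 := div_le_one_of_le₀ (by linarith) (by linarith)
  -- when `a = 1` the junk value `t = 0` is right, since then `α = 1` as well
  have hta : t * (1 - a) = α - a := div_mul_cancel_of_imp fun h ↦ by linarith
  have hlift : ∀ x, 0 ≤ t * (1 - φ x) ∧ 0 ≤ (1 - t) * (1 - φ x) := fun x ↦
    have hφ1 : 0 ≤ 1 - φ x := sub_nonneg.2 (h01 x).2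
    ⟨mul_nonneg ht0 hφ1, mul_nonneg (sub_nonneg.2 ht1) hφ1⟩
  refine ⟨fun x ↦ φ x + t * (1 - φ x), hφ.add ((measurable_const.sub hφ).const_mul t),
    fun x ↦ ⟨add_nonneg (h01 x).1 (hlift x).1, by beta_reduce; linarith [(hlift x).2]⟩,
    fun x ↦ le_add_of_nonneg_right (hlift x).1, ?_⟩
  have hI := integrable_of_mem_Icc P hφ h01
  have hI' : Integrable (fun x ↦ t * (1 - φ x)) P := ((integrable_const 1).sub hI).const_mul t
  show ∫ x, φ x + t * (1 - φ x) ∂P = α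
  rw [integral_add hI hI', integral_const_mul, integral_sub (integrable_const 1) hI]
  simp only [integral_const, probReal_univ, one_smul]
  linarith

end MeasureTheory

section Tradeoff

variable {Ω : Type*} [MeasurableSpace Ω] {P Q : Measure Ω} {α : ℝ}

theorem tradeoff_le [IsFiniteMeasure Q] {φ : Ω → ℝ} (hφ : Measurable φ)
    (h01 : ∀ x, φ x ∈ Set.Icc (0 : ℝ) 1) (hφα : ∫ x, φ x ∂P ≤ α) :
    tradeoff P Q α ≤ 1 - ∫ x, φ x ∂Q := by
  refine csInf_le ⟨1 - Q.real Set.univ, ?_⟩ ⟨φ, hφ, h01, hφα, rfl⟩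
  rintro _ ⟨ψ, -, hψ01, -, rfl⟩
  linarith [integral_le_measureReal_univ_of_mem_Icc Q hψ01]

theorem le_tradeoff {b : ℝ} (hα : 0 ≤ α)
    (h : ∀ φ : Ω → ℝ, Measurable φ → (∀ x, φ x ∈ Set.Icc (0 : ℝ) 1) →
      ∫ x, φ x ∂P ≤ α → b ≤ 1 - ∫ x, φ x ∂Q) :
    b ≤ tradeoff P Q α := by
  refine le_csInf ⟨1, 0, measurable_const, fun _ ↦ ⟨le_rfl, zero_le_one⟩, by simpa, by simp⟩ ?_
  rintro _ ⟨φ, hφ, h01, hφα, rfl⟩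
  exact h φ hφ h01 hφα

end Tradeoff

/-- Subsampling/mixture: for `p ∈ (0,1)` and `f = T(P‖Q)`,
`T(P ‖ (1−p)P + pQ)(α) = p f(α) + (1−p)(1−α)` on `[0,1]`. -/
theorem tradeoff_mixture {Ω : Type*} [MeasurableSpace Ω]
    (P Q : Measure Ω) [IsProbabilityMeasure P] [IsProbabilityMeasure Q]
    (p : ℝ) (hp : p ∈ Set.Ioo (0 : ℝ) 1) :
    ∀ α ∈ Set.Icc (0 : ℝ) 1,
      tradeoff P (ENNReal.ofReal (1 - p) • P + ENNReal.ofReal p • Q) α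
        = p * tradeoff P Q α + (1 - p) * (1 - α) := by
  rintro α ⟨hα0, hα1⟩
  obtain ⟨hp0, hp1⟩ := hp
  set M := ENNReal.ofReal (1 - p) • P + ENNReal.ofReal p • Q
  have hmix : ∀ φ : Ω → ℝ, Measurable φ → (∀ x, φ x ∈ Set.Icc (0 : ℝ) 1) →
      1 - ∫ x, φ x ∂M = (1 - p) * (1 - ∫ x, φ x ∂P) + p * (1 - ∫ x, φ x ∂Q) :=
    fun φ hφ h01 ↦ by
    rw [integral_ofReal_smul_add_ofReal_smul (by linarith) hp0.le
      (integrable_of_mem_Icc P hφ h01) (integrable_of_mem_Icc Q hφ h01)]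
    ring
  refine le_antisymm ?_ (le_tradeoff hα0 fun φ hφ h01 hφα ↦ ?_)
  · suffices (tradeoff P M α - (1 - p) * (1 - α)) / p ≤ tradeoff P Q α by
      rw [div_le_iff₀ hp0] at this; linarith
    refine le_tradeoff hα0 fun φ hφ h01 hφα ↦ ?_
    obtain ⟨ψ, hψ, hψ01, hφψ, hψα⟩ := exists_le_integral_eq P hφ h01 hφα hα1
    have hQ : ∫ x, φ x ∂Q ≤ ∫ x, ψ x ∂Q := integral_mono (integrable_of_mem_Icc Q hφ h01)
      (integrable_of_mem_Icc Q hψ hψ01) hφψ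
    have hM := tradeoff_le (Q := M) hψ hψ01 hψα.le
    rw [hmix ψ hψ hψ01, hψα] at hM
    rw [div_le_iff₀ hp0]
    nlinarith
  · have hQ := tradeoff_le (Q := Q) hφ h01 hφα
    rw [hmix φ hφ h01]
    nlinarith
end

section
/- (Parametrization of the subroutine's privacy curve) Let r be a positive integer and σ > 0. Let W be distributed χ²_r, set Z_r = sqrt(r/W), and let G be a standard normal random variable independent of W. Let f = T( law(Z_r, G) ‖ law(Z_r, Z_r/σ + G) ) be the tradeoff function between the two joint laws on ℝ². Then f can be parametrized as f(α(t)) = β(t) for t ∈ ℝ, where α(t) = E[Φ(−tσ/Z_r − Z_r/(2σ))] and β(t) = E[Φ(tσ/Z_r − Z_r/(2σ))], with Φ the standard normal CDF. -/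
open MeasureTheory ProbabilityTheory

/-- Standard Gaussian measure `N(0, I_d)` on `ℝ^d`, as the `d`-fold product of `N(0,1)`. -/
noncomputable def stdGaussianPi (d : ℕ) : Measure (Fin d → ℝ) :=
  Measure.pi fun _ => gaussianReal 0 1

/-- Chi-square distribution with `r` degrees of freedom (Gamma with shape `r/2`, rate `1/2`). -/
noncomputable def chiSq (r : ℕ) : Measure ℝ := gammaMeasure (r / 2) (1 / 2)

/-- The standard normal CDF `Φ(x) = (1/√(2π)) ∫_{−∞}^x e^{−u²/2} du`. -/
noncomputable def stdGaussianCDF (x : ℝ) : ℝ :=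
  (1 / Real.sqrt (2 * Real.pi)) * ∫ u in Set.Iic x, Real.exp (-u ^ 2 / 2)

/-!
Conditionally on `Z_r = z > 0`, the second coordinate is `N(0,1)` under the first law and
`N(z/σ,1)` under the second, with likelihood ratio `exp((z/σ)x − z²/(2σ²))`. The test
rejecting when `x ≥ tσ/z + z/(2σ)`, i.e. when this ratio is at least `e^t`, therefore
maximises `E_Q φ − e^t E_P φ` for every `z` at once (Neyman–Pearson), hence also after
integrating over `Z_r`. A test maximising that Lagrangian attains the tradeoff curve at its
own size, and the size and power of this test are `α(t)` and `1 − β(t)`.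
-/

open Set Real

theorem tradeoff_integral_eq_of_forall_le {Ω : Type*} [MeasurableSpace Ω] {P Q : Measure Ω}
    {ψ : Ω → ℝ} {k : ℝ} (hk : 0 ≤ k) (hψ : Measurable ψ) (hψ01 : ∀ x, ψ x ∈ Icc (0 : ℝ) 1)
    (hopt : ∀ φ : Ω → ℝ, Measurable φ → (∀ x, φ x ∈ Icc (0 : ℝ) 1) →
      ∫ x, φ x ∂Q - k * ∫ x, φ x ∂P ≤ ∫ x, ψ x ∂Q - k * ∫ x, ψ x ∂P) :
    tradeoff P Q (∫ x, ψ x ∂P) = 1 - ∫ x, ψ x ∂Q := by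
  unfold tradeoff
  set S := {b : ℝ | ∃ φ : Ω → ℝ, Measurable φ ∧ (∀ x, φ x ∈ Icc (0 : ℝ) 1) ∧
    (∫ x, φ x ∂P) ≤ ∫ x, ψ x ∂P ∧ b = 1 - ∫ x, φ x ∂Q}
  have hmem : 1 - ∫ x, ψ x ∂Q ∈ S := ⟨ψ, hψ, hψ01, le_rfl, rfl⟩
  have hlow : 1 - ∫ x, ψ x ∂Q ∈ lowerBounds S := by
    rintro _ ⟨φ, hφ, hφ01, hsize, rfl⟩
    nlinarith [hopt φ hφ hφ01, mul_le_mul_of_nonneg_left hsize hk]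
  exact le_antisymm (csInf_le ⟨_, hlow⟩ hmem) (le_csInf ⟨_, hmem⟩ hlow)

theorem integral_mul_le_integral_indicator_mul {α : Type*} [MeasurableSpace α] {μ : Measure α}
    {φ h : α → ℝ} {S : Set α} (hS : MeasurableSet S) (hh : Integrable h μ)
    (hφ : AEStronglyMeasurable φ μ) (hφ01 : ∀ x, φ x ∈ Icc (0 : ℝ) 1)
    (hpos : ∀ x ∈ S, 0 ≤ h x) (hneg : ∀ x ∉ S, h x ≤ 0) :
    ∫ x, φ x * h x ∂μ ≤ ∫ x, S.indicator 1 x * h x ∂μ := by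
  refine integral_mono (hh.bdd_mul hφ (c := 1) (ae_of_all _ fun x => ?_))
    (hh.bdd_mul (measurable_const.indicator hS).aestronglyMeasurable (c := 1)
      (ae_of_all _ fun x => ?_)) fun x => ?_
  · rw [Real.norm_eq_abs, abs_le]
    exact ⟨by linarith [(hφ01 x).1], (hφ01 x).2⟩
  · by_cases hx : x ∈ S <;> simp [hx]
  · by_cases hx : x ∈ S
    · simpa [hx] using mul_le_of_le_one_left (hpos x hx) (hφ01 x).2
    · simpa [hx] using mul_nonpos_of_nonneg_of_nonpos (hφ01 x).1 (hneg x hx)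

theorem integral_sub_const_mul_integral_le {α : Type*} [MeasurableSpace α] {μ : Measure α}
    {f g f' g' : α → ℝ} (k : ℝ) (hf : Integrable f μ) (hg : Integrable g μ)
    (hf' : Integrable f' μ) (hg' : Integrable g' μ)
    (hle : ∀ᵐ w ∂μ, f w - k * g w ≤ f' w - k * g' w) :
    ∫ w, f w ∂μ - k * ∫ w, g w ∂μ ≤ ∫ w, f' w ∂μ - k * ∫ w, g' w ∂μ := by
  rw [← integral_const_mul, ← integral_const_mul, ← integral_sub hf (hg.const_mul k),
    ← integral_sub hf' (hg'.const_mul k)]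
  exact integral_mono_ae (hf.sub (hg.const_mul k)) (hf'.sub (hg'.const_mul k)) hle

theorem ae_pos_gammaMeasure (a r : ℝ) : ∀ᵐ x ∂gammaMeasure a r, 0 < x := by
  have hne : ∀ᵐ x ∂gammaMeasure a r, x ≠ 0 :=
    (withDensity_absolutelyContinuous _ _).ae_le (Measure.ae_ne volume 0)
  have hnonneg : ∀ᵐ x ∂gammaMeasure a r, 0 ≤ x := by
    rw [ae_iff]
    simp only [not_le]
    change gammaMeasure a r (Iio 0) = 0
    rw [gammaMeasure, withDensity_apply _ measurableSet_Iio]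
    exact lintegral_gammaPDF_of_nonpos le_rfl
  filter_upwards [hne, hnonneg] with x hx0 hx using lt_of_le_of_ne hx (Ne.symm hx0)

section Gaussian

theorem gaussianPDFReal_zero_one (x : ℝ) :
    gaussianPDFReal 0 1 x = (√(2 * π))⁻¹ * exp (-x ^ 2 / 2) := by
  simp [gaussianPDFReal]

theorem gaussianPDFReal_one_eq_mul_exp (m x : ℝ) :
    gaussianPDFReal m 1 x = gaussianPDFReal 0 1 x * exp (m * x - m ^ 2 / 2) := by
  simp only [gaussianPDFReal, NNReal.coe_one, mul_one, sub_zero, mul_assoc, ← exp_add]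
  congr 2
  ring

theorem stdGaussianCDF_eq_measureReal (x : ℝ) :
    stdGaussianCDF x = (gaussianReal 0 1).real (Iic x) := by
  rw [measureReal_def, gaussianReal_apply_eq_integral _ one_ne_zero, ENNReal.toReal_ofReal
    (setIntegral_nonneg measurableSet_Iic fun _ _ => gaussianPDFReal_nonneg _ _ _)]
  simp_rw [gaussianPDFReal_zero_one]
  rw [integral_const_mul, stdGaussianCDF, one_div]

theorem measureReal_gaussianReal_Ici (m c : ℝ) :
    (gaussianReal m 1).real (Ici c) = stdGaussianCDF (m - c) := by
  have hmap : (gaussianReal 0 1).map (m - ·) = gaussianReal m 1 := by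
    rw [gaussianReal_map_const_sub, sub_zero]
  rw [stdGaussianCDF_eq_measureReal, ← hmap,
    map_measureReal_apply (measurable_const_sub m) measurableSet_Ici]
  congr 1
  ext x
  simp [le_sub_comm]

theorem stdGaussianCDF_neg (x : ℝ) : stdGaussianCDF (-x) = 1 - stdGaussianCDF x := by
  have := nullSingletonClass_gaussianReal (μ := 0) (one_ne_zero (α := NNReal))
  rw [← zero_sub, ← measureReal_gaussianReal_Ici, stdGaussianCDF_eq_measureReal, ← compl_Iio,
    measureReal_compl measurableSet_Iio, probReal_univ, measureReal_congr Iio_ae_eq_Iic]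

theorem integral_gaussianReal_sub_exp_mul_integral (m t : ℝ) {φ : ℝ → ℝ} (hφ : Measurable φ)
    (hφ01 : ∀ x, φ x ∈ Icc (0 : ℝ) 1) :
    ∫ x, φ x ∂gaussianReal m 1 - exp t * ∫ x, φ x ∂gaussianReal 0 1
      = ∫ x, φ x * (gaussianPDFReal m 1 x - exp t * gaussianPDFReal 0 1 x) := by
  have hint : ∀ m', Integrable (fun x => φ x * gaussianPDFReal m' 1 x) :=
    fun m' => (integrable_gaussianPDFReal m' 1).bdd_mul hφ.aestronglyMeasurable (c := 1)
      (ae_of_all _ fun x => by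
        rw [Real.norm_eq_abs, abs_of_nonneg (hφ01 x).1]; exact (hφ01 x).2)
  simp_rw [integral_gaussianReal_eq_integral_smul one_ne_zero, smul_eq_mul, mul_comm _ (φ _)]
  rw [← integral_const_mul, ← integral_sub (hint m) ((hint 0).const_mul _)]
  congr 1
  ext x
  ring

/-- The Neyman–Pearson lemma for `N(0,1)` against `N(m,1)`: the likelihood ratio
`exp (m x − m²/2)` is at least `e^t` exactly on `[c, ∞)`. -/
theorem gaussianReal_neymanPearson {m c t : ℝ} (hm : 0 < m) (hc : m * c = t + m ^ 2 / 2)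
    {φ : ℝ → ℝ} (hφ : Measurable φ) (hφ01 : ∀ x, φ x ∈ Icc (0 : ℝ) 1) :
    ∫ x, φ x ∂gaussianReal m 1 - exp t * ∫ x, φ x ∂gaussianReal 0 1
      ≤ (gaussianReal m 1).real (Ici c) - exp t * (gaussianReal 0 1).real (Ici c) := by
  have hind : Measurable ((Ici c).indicator (1 : ℝ → ℝ)) :=
    measurable_const.indicator measurableSet_Ici
  rw [← integral_indicator_one measurableSet_Ici, ← integral_indicator_one measurableSet_Ici,
    integral_gaussianReal_sub_exp_mul_integral m t hφ hφ01,
    integral_gaussianReal_sub_exp_mul_integral m t hind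
      fun x => by by_cases hx : x ∈ Ici c <;> simp [hx]]
  have hratio : ∀ x, gaussianPDFReal m 1 x - exp t * gaussianPDFReal 0 1 x
      = gaussianPDFReal 0 1 x * (exp (m * x - m ^ 2 / 2) - exp t) := fun x => by
    rw [gaussianPDFReal_one_eq_mul_exp]; ring
  refine integral_mul_le_integral_indicator_mul measurableSet_Ici
    ((integrable_gaussianPDFReal m 1).sub ((integrable_gaussianPDFReal 0 1).const_mul _))
    hφ.aestronglyMeasurable hφ01 (fun x hx => ?_) (fun x hx => ?_) <;> rw [hratio]
  · have : t ≤ m * x - m ^ 2 / 2 := by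
      nlinarith [mul_le_mul_of_nonneg_left (mem_Ici.1 hx) hm.le]
    exact mul_nonneg (gaussianPDFReal_nonneg _ _ _) (sub_nonneg.2 (exp_le_exp.2 this))
  · have : m * x - m ^ 2 / 2 ≤ t := by
      nlinarith [mul_le_mul_of_nonneg_left (not_le.1 hx).le hm.le]
    exact mul_nonpos_of_nonneg_of_nonpos (gaussianPDFReal_nonneg _ _ _)
      (sub_nonpos.2 (exp_le_exp.2 this))

theorem integral_gaussianReal_eq_integral_const_add (m : ℝ) {f : ℝ → ℝ} (hf : Measurable f) :
    ∫ x, f x ∂gaussianReal m 1 = ∫ g, f (m + g) ∂gaussianReal 0 1 := by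
  have hmap : (gaussianReal 0 1).map (m + ·) = gaussianReal m 1 := by
    rw [gaussianReal_map_const_add, zero_add]
  rw [← hmap, integral_map (measurable_const_add m).aemeasurable hf.aestronglyMeasurable]

end Gaussian

section Mixture

variable {χ : Measure ℝ} [IsProbabilityMeasure χ] {s m : ℝ → ℝ} {φ : ℝ × ℝ → ℝ}

theorem integral_prodMk_gaussianReal_eq_integral_const_add (hφ : Measurable φ) :
    (fun w => ∫ x, φ (s w, x) ∂gaussianReal (m w) 1)
      = fun w => ∫ g, φ (s w, m w + g) ∂gaussianReal 0 1 :=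
  funext fun _ => integral_gaussianReal_eq_integral_const_add _ (hφ.comp measurable_prodMk_left)

theorem integrable_comp_shift_prod (hs : Measurable s) (hm : Measurable m) (hφ : Measurable φ)
    (hφ01 : ∀ p, φ p ∈ Icc (0 : ℝ) 1) :
    Integrable (fun p : ℝ × ℝ => φ (s p.1, m p.1 + p.2)) (χ.prod (gaussianReal 0 1)) :=
  .of_mem_Icc 0 1 (by fun_prop) (ae_of_all _ fun _ => hφ01 _)

theorem integrable_integral_gaussianReal (hs : Measurable s) (hm : Measurable m)
    (hφ : Measurable φ) (hφ01 : ∀ p, φ p ∈ Icc (0 : ℝ) 1) :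
    Integrable (fun w => ∫ x, φ (s w, x) ∂gaussianReal (m w) 1) χ := by
  rw [integral_prodMk_gaussianReal_eq_integral_const_add hφ]
  exact (integrable_comp_shift_prod hs hm hφ hφ01).integral_prod_left

theorem integral_map_prod_gaussianReal (hs : Measurable s) (hm : Measurable m)
    (hφ : Measurable φ) (hφ01 : ∀ p, φ p ∈ Icc (0 : ℝ) 1) :
    ∫ p, φ p ∂(χ.prod (gaussianReal 0 1)).map (fun p => (s p.1, m p.1 + p.2))
      = ∫ w, ∫ x, φ (s w, x) ∂gaussianReal (m w) 1 ∂χ := by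
  rw [integral_map (by fun_prop) hφ.aestronglyMeasurable,
    integral_prod _ (integrable_comp_shift_prod hs hm hφ hφ01),
    integral_prodMk_gaussianReal_eq_integral_const_add hφ]


theorem integral_map_prod_gaussianReal_zero (hs : Measurable s) (hφ : Measurable φ)
    (hφ01 : ∀ p, φ p ∈ Icc (0 : ℝ) 1) :
    ∫ p, φ p ∂(χ.prod (gaussianReal 0 1)).map (fun p => (s p.1, p.2))
      = ∫ w, ∫ x, φ (s w, x) ∂gaussianReal 0 1 ∂χ := by
  simpa using integral_map_prod_gaussianReal (m := fun _ => 0) hs measurable_const hφ hφ01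

/-- The likelihood ratio test of `N(0,1)` against `N(z/σ,1)` at level `e^t`, given `z`. -/
noncomputable def thresholdTest (σ t : ℝ) : ℝ × ℝ → ℝ :=
  {p | t * σ / p.1 + p.1 / (2 * σ) ≤ p.2}.indicator 1

theorem measurable_thresholdTest (σ t : ℝ) : Measurable (thresholdTest σ t) :=
  measurable_const.indicator (measurableSet_le (by fun_prop) (by fun_prop))

theorem thresholdTest_mem_Icc (σ t : ℝ) (p : ℝ × ℝ) : thresholdTest σ t p ∈ Icc (0 : ℝ) 1 := by
  by_cases hp : t * σ / p.1 + p.1 / (2 * σ) ≤ p.2 <;> simp [thresholdTest, hp]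

theorem integral_thresholdTest_prodMk (σ t z m : ℝ) :
    ∫ x, thresholdTest σ t (z, x) ∂gaussianReal m 1
      = (gaussianReal m 1).real (Ici (t * σ / z + z / (2 * σ))) := by
  rw [← integral_indicator_one measurableSet_Ici]
  rfl

theorem integral_sub_exp_mul_integral_le_thresholdTest (hs : Measurable s)
    (hpos : ∀ᵐ w ∂χ, 0 < s w) {σ : ℝ} (hσ : 0 < σ) (t : ℝ) (hφ : Measurable φ)
    (hφ01 : ∀ p, φ p ∈ Icc (0 : ℝ) 1) :
    ∫ p, φ p ∂(χ.prod (gaussianReal 0 1)).map (fun p => (s p.1, s p.1 / σ + p.2))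
        - exp t * ∫ p, φ p ∂(χ.prod (gaussianReal 0 1)).map (fun p => (s p.1, p.2))
      ≤ ∫ p, thresholdTest σ t p
            ∂(χ.prod (gaussianReal 0 1)).map (fun p => (s p.1, s p.1 / σ + p.2))
        - exp t * ∫ p, thresholdTest σ t p
            ∂(χ.prod (gaussianReal 0 1)).map (fun p => (s p.1, p.2)) := by
  have hm : Measurable fun w => s w / σ := hs.div_const σ
  have hψ := measurable_thresholdTest σ t
  have hψ01 := thresholdTest_mem_Icc σ t
  rw [integral_map_prod_gaussianReal hs hm hφ hφ01, integral_map_prod_gaussianReal hs hm hψ hψ01,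
    integral_map_prod_gaussianReal_zero hs hφ hφ01, integral_map_prod_gaussianReal_zero hs hψ hψ01]
  refine integral_sub_const_mul_integral_le _ (integrable_integral_gaussianReal hs hm hφ hφ01)
    (integrable_integral_gaussianReal (m := fun _ => 0) hs measurable_const hφ hφ01)
    (integrable_integral_gaussianReal hs hm hψ hψ01)
    (integrable_integral_gaussianReal (m := fun _ => 0) hs measurable_const hψ hψ01)
    ?_
  filter_upwards [hpos] with w hw
  simp only [integral_thresholdTest_prodMk]
  refine gaussianReal_neymanPearson (div_pos hw hσ) ?_ (hφ.comp measurable_prodMk_left)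
    fun x => hφ01 _
  field_simp

theorem tradeoff_map_prod_gaussianReal (hs : Measurable s) (hpos : ∀ᵐ w ∂χ, 0 < s w) {σ : ℝ}
    (hσ : 0 < σ) (t : ℝ) :
    tradeoff ((χ.prod (gaussianReal 0 1)).map (fun p => (s p.1, p.2)))
      ((χ.prod (gaussianReal 0 1)).map (fun p => (s p.1, s p.1 / σ + p.2)))
      (∫ w, stdGaussianCDF (-(t * σ / s w) - s w / (2 * σ)) ∂χ)
      = ∫ w, stdGaussianCDF (t * σ / s w - s w / (2 * σ)) ∂χ := by
  have hm : Measurable fun w => s w / σ := hs.div_const σ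
  have hψ := measurable_thresholdTest σ t
  have hψ01 := thresholdTest_mem_Icc σ t
  have hopt := tradeoff_integral_eq_of_forall_le (exp_pos t).le hψ hψ01
    fun φ hφ hφ01 => integral_sub_exp_mul_integral_le_thresholdTest hs hpos hσ t hφ hφ01
  have hβ_int := integrable_integral_gaussianReal (χ := χ) hs hm hψ hψ01
  rw [integral_map_prod_gaussianReal_zero hs hψ hψ01,
    integral_map_prod_gaussianReal hs hm hψ hψ01] at hopt
  simp only [integral_thresholdTest_prodMk, measureReal_gaussianReal_Ici] at hopt hβ_int
  have hsymm : ∀ w, stdGaussianCDF (s w / σ - (t * σ / s w + s w / (2 * σ)))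
      = 1 - stdGaussianCDF (t * σ / s w - s w / (2 * σ)) := fun w => by
    rw [← stdGaussianCDF_neg]
    congr 1
    ring
  simp only [hsymm, zero_sub, neg_add'] at hopt hβ_int
  have hβ_int' : Integrable (fun w => stdGaussianCDF (t * σ / s w - s w / (2 * σ))) χ := by
    convert (integrable_const (1 : ℝ)).sub hβ_int using 1
    ext w
    simp
  rw [integral_sub (integrable_const 1) hβ_int', integral_const, probReal_univ, one_smul,
    sub_sub_cancel] at hopt
  exact hopt

end Mixture

/-- Parametrization of the subroutine's privacy curve: with `W ~ χ²_r`,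
`Z_r = sqrt(r/W)`, `G ~ N(0,1)` independent of `W`, the tradeoff function
`f = T(law(Z_r, G) ‖ law(Z_r, Z_r/σ + G))` satisfies `f(α(t)) = β(t)` where
`α(t) = E[Φ(−tσ/Z_r − Z_r/(2σ))]` and `β(t) = E[Φ(tσ/Z_r − Z_r/(2σ))]`. -/
theorem jl_privacy_curve_parametrization (r : ℕ) (hr : 0 < r) (σ : ℝ) (hσ : 0 < σ) :
    ∀ t : ℝ,
      tradeoff
          (((chiSq r).prod (gaussianReal 0 1)).map
            (fun p => (Real.sqrt (r / p.1), p.2)))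
          (((chiSq r).prod (gaussianReal 0 1)).map
            (fun p => (Real.sqrt (r / p.1), Real.sqrt (r / p.1) / σ + p.2)))
          (∫ w, stdGaussianCDF (-(t * σ / Real.sqrt (r / w)) - Real.sqrt (r / w) / (2 * σ))
            ∂(chiSq r))
        = ∫ w, stdGaussianCDF (t * σ / Real.sqrt (r / w) - Real.sqrt (r / w) / (2 * σ))
            ∂(chiSq r) := by
  have : IsProbabilityMeasure (chiSq r) :=
    isProbabilityMeasure_gammaMeasure (by positivity) (by norm_num)
  have hpos : ∀ᵐ w ∂chiSq r, 0 < √(r / w) := by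
    filter_upwards [ae_pos_gammaMeasure _ _] with w hw
    positivity
  exact tradeoff_map_prod_gaussianReal (by fun_prop) hpos hσ
end
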